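/- Let A be a bounded linear operator on a Banach space B, and suppose there exist a Banach space B' with a compact embedding B ↪ B', constants ρ > 0, and for each n ≥ 1 constants C₁ and C(n) such that ‖A^n f‖_B ≤ C₁ ρ^n ‖f‖_B + C(n) ‖f‖_{B'} for all f ∈ B. Then the essential spectral radius of A on B is at most ρ. -/

import Mathlib

/-- The essential norm of a bounded operator: its distance to the compact
operators (the norm of its image in the Calkin algebra). -/
noncomputable def essNorm {B : Type*} [NormedAddCommGroup B] [NormedSpace ℝ B]
    (A : B →L[ℝ] B) : ℝ :=
  sInf {r : ℝ | ∃ K : B →L[ℝ] B, IsCompactOperator K ∧ r = ‖A - K‖}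

/-- The essential spectral radius, via Nussbaum's formula:
ρ_ess(A) = lim_n (essNorm(Aⁿ))^{1/n} = inf_{n ≥ 1} (essNorm(Aⁿ))^{1/n}. -/
noncomputable def essSpectralRadius {B : Type*} [NormedAddCommGroup B]
    [NormedSpace ℝ B] (A : B →L[ℝ] B) : ℝ :=
  sInf {r : ℝ | ∃ n : ℕ, 0 < n ∧ r = essNorm (A ^ n) ^ (1 / (n : ℝ))}

/-!
Compactness of `ι` yields finitely many functionals on whose common kernel `‖ι f‖ ≤ ε ‖f‖`;
there the Lasota–Yorke inequality gives `‖Aⁿ f‖ ≤ b ‖f‖` with `b` just above `|C₁| ρⁿ`, and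
iterating, `‖(Aⁿ)ᵏ f‖ ≤ bᵏ ‖f‖` on the common kernel of `k` times as many functionals.
For any `d` functionals `Φ`, an approximate Auerbach basis of the range of `Φ` lifts to a
finite-rank `π` with `Φ π = Φ` and `‖π‖ ≤ 2d`, so `T - T π` has norm at most `(1 + 2d) b`
whenever `T` is bounded by `b` on the kernel of `Φ`. Hence `essNorm (Aⁿᵏ) ≤ (1 + 2dk) bᵏ`,
and the linear factor disappears under `nk`-th roots.
-/

open Metric Set Filter Module Function Topology

theorem span_closedBall_zero_eq_top {E : Type*} [NormedAddCommGroup E] [NormedSpace ℝ E] {r : ℝ}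
    (hr : 0 < r) : Submodule.span ℝ (closedBall (0 : E) r) = ⊤ :=
  ((absorbent_nhds_zero (closedBall_mem_nhds 0 hr)).mono Submodule.subset_span).submodule_eq_top

/-- An approximate Auerbach basis: pick `w ∈ Sᵈ` whose determinant is more than half the
supremum of `|det|` over `Sᵈ`; by Cramer's rule, replacing `w i` by `u ∈ S` multiplies the
determinant by the `i`-th coordinate of `u`, which is therefore at most `2` in absolute value. -/
theorem exists_basis_mem_abs_repr_le_two {V : Type*} [NormedAddCommGroup V] [NormedSpace ℝ V]
    [FiniteDimensional ℝ V] {S : Set V} (hS : Bornology.IsBounded S)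
    (hspan : Submodule.span ℝ S = ⊤) :
    ∃ b : Basis (Fin (finrank ℝ V)) ℝ V, (∀ i, b i ∈ S) ∧ ∀ u ∈ S, ∀ i, |b.repr u i| ≤ 2 := by
  obtain ⟨w₀, hw₀S, hw₀span, hw₀li⟩ := Submodule.exists_fun_fin_finrank_span_eq ℝ S
  let b₀ := (Basis.mk hw₀li (hw₀span.trans hspan).ge).reindex
    (finCongr (by rw [hspan, finrank_top]))
  let D := b₀.det
  let P : Set (Fin (finrank ℝ V) → V) := univ.pi fun _ => S
  have hbdd : BddAbove ((fun w => |D w|) '' P) :=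
    (((Bornology.IsBounded.pi fun _ => hS).isCompact_closure).image
      (continuous_abs.comp b₀.continuous_toMatrix.matrix_det)).bddAbove.mono
      (image_mono subset_closure)
  have hb₀P : ⇑b₀ ∈ P := fun i _ => by simpa [b₀] using hw₀S _
  set M := sSup ((fun w => |D w|) '' P)
  have hM : 0 < M := by
    have h : |b₀.det b₀| ≤ M := le_csSup hbdd ⟨b₀, hb₀P, rfl⟩
    rw [b₀.det_self, abs_one] at h
    exact one_pos.trans_le h
  obtain ⟨_, ⟨w, hwP, rfl⟩, hw⟩ :=
    exists_lt_of_lt_csSup (Set.Nonempty.image (fun w => |D w|) ⟨b₀, hb₀P⟩) (half_lt_self hM)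
  have hDw : 0 < |D w| := (half_pos hM).trans hw
  obtain ⟨hli, hsp⟩ := b₀.is_basis_iff_det.2 (isUnit_iff_ne_zero.2 (abs_pos.1 hDw))
  refine ⟨Basis.mk hli hsp.ge, fun i => by simpa using hwP i (mem_univ i), fun u hu i => ?_⟩
  have hcramer : D w * (Basis.mk hli hsp.ge).repr u i = D (update w i u) := by
    simpa using congr($(b₀.det_smul_mk_coord_eq_det_update hli hsp.ge i) u)
  have hupdate : |D (update w i u)| ≤ M :=
    le_csSup hbdd ⟨_, fun j _ => by
      rcases eq_or_ne j i with rfl | hj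
      · simpa using hu
      · simpa [hj] using hwP j (mem_univ j), rfl⟩
  rw [← hcramer, abs_mul] at hupdate
  nlinarith [abs_nonneg ((Basis.mk hli hsp.ge).repr u i)]

section

variable {B F : Type*} [NormedAddCommGroup B] [NormedSpace ℝ B]
  [NormedAddCommGroup F] [NormedSpace ℝ F] [FiniteDimensional ℝ F]

theorem exists_isCompactOperator_comp_eq_norm_le (Φ : B →L[ℝ] F) :
    ∃ π : B →L[ℝ] B, IsCompactOperator π ∧ Φ ∘L π = Φ ∧ ‖π‖ ≤ 2 * finrank ℝ F := by
  let W := LinearMap.range (Φ : B →ₗ[ℝ] F)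
  let Ψ : B →L[ℝ] W := Φ.codRestrict W (LinearMap.mem_range_self (Φ : B →ₗ[ℝ] F))
  have hspan : Submodule.span ℝ (Ψ '' closedBall 0 1) = ⊤ := by
    rw [← ContinuousLinearMap.coe_coe, Submodule.span_image, span_closedBall_zero_eq_top one_pos,
      Submodule.map_top]
    exact LinearMap.range_eq_top.2 fun ⟨_, x, hx⟩ => ⟨x, Subtype.ext hx⟩
  obtain ⟨b, hbS, hrepr⟩ := exists_basis_mem_abs_repr_le_two
    (Ψ.lipschitz.isBounded_image isBounded_closedBall) hspan
  choose x hx hΨx using hbS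
  let L : W →L[ℝ] B := LinearMap.toContinuousLinearMap (b.constr ℝ x)
  have hΨL : ∀ u, Ψ (L u) = u := fun u => by
    have : Ψ.toLinearMap ∘ₗ b.constr ℝ x = LinearMap.id := b.ext fun i => by simp [hΨx]
    exact LinearMap.congr_fun this u
  have hcoord : ∀ i f, |b.repr (Ψ f) i| ≤ 2 * ‖f‖ := fun i =>
    ((LinearMap.toContinuousLinearMap (b.coord i)) ∘L Ψ).le_of_opNorm_le
      (ContinuousLinearMap.opNorm_le_of_unit_norm zero_le_two fun f hf =>
        hrepr _ ⟨f, by simp [hf], rfl⟩ i)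
  refine ⟨L ∘L Ψ, (isCompactOperator_of_locallyCompactSpace_rng L).comp_clm Ψ,
    ContinuousLinearMap.ext fun f => congr_arg Subtype.val (hΨL (Ψ f)), ?_⟩
  refine ContinuousLinearMap.opNorm_le_bound _ (by positivity) fun f => ?_
  calc ‖L (Ψ f)‖ = ‖∑ i, b.repr (Ψ f) i • x i‖ := by
        simp [L, Basis.constr_apply_fintype (S := ℝ)]
    _ ≤ ∑ _i : Fin (finrank ℝ W), 2 * ‖f‖ := norm_sum_le_of_le _ fun i _ => by
      rw [norm_smul, Real.norm_eq_abs]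
      simpa using mul_le_mul (hcoord i f) (mem_closedBall_zero_iff.1 (hx i)) (norm_nonneg _)
        (by positivity)
    _ ≤ 2 * finrank ℝ F * ‖f‖ := by
      rw [Finset.sum_const, Finset.card_univ, Fintype.card_fin, nsmul_eq_mul, ← mul_assoc,
        mul_comm (finrank ℝ W : ℝ)]
      gcongr
      exact_mod_cast Submodule.finrank_le W

end

theorem IsCompact.exists_clm_fin_norm_lt_of_map_eq_zero {E : Type*} [NormedAddCommGroup E]
    [NormedSpace ℝ E] {K : Set E} (hK : IsCompact K) {ε : ℝ} (hε : 0 < ε) :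
    ∃ (n : ℕ) (Φ : E →L[ℝ] (Fin n → ℝ)), ∀ x ∈ K, Φ x = 0 → ‖x‖ < ε := by
  obtain ⟨t, -, ht, hKt⟩ := finite_cover_balls_of_compact hK (half_pos hε)
  obtain ⟨n, y, rfl⟩ := ht.fin_embedding
  choose ψ hψ hψy using fun i => exists_dual_vector'' ℝ (y i)
  refine ⟨n, .pi ψ, fun x hx hΦx => ?_⟩
  obtain ⟨_, ⟨i, rfl⟩, hxy⟩ := mem_iUnion₂.1 (hKt hx)
  have hxy : ‖x - y i‖ < ε / 2 := mem_ball_iff_norm.1 hxy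
  -- `ψ i` norms `y i` and vanishes at `x`, so `‖y i‖ ≤ ‖y i - x‖`.
  have hy : ‖y i‖ ≤ ‖x - y i‖ := by
    have h : ψ i (y i - x) = ‖y i‖ := by simpa [hψy] using congr_fun hΦx i
    rw [norm_sub_rev, ← h]
    exact (le_abs_self _).trans ((ψ i).le_of_opNorm_le (hψ i) _ |>.trans_eq (one_mul _))
  calc ‖x‖ ≤ ‖x - y i‖ + ‖y i‖ := norm_le_norm_sub_add x (y i)
    _ < ε := by linarith

section

variable {B B' : Type*} [NormedAddCommGroup B] [NormedSpace ℝ B]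
  [NormedAddCommGroup B'] [NormedSpace ℝ B']

theorem IsCompactOperator.exists_clm_fin_norm_le_of_map_eq_zero {ι : B →L[ℝ] B'}
    (hι : IsCompactOperator ι) {ε : ℝ} (hε : 0 < ε) :
    ∃ (n : ℕ) (Φ : B →L[ℝ] (Fin n → ℝ)), ∀ f, Φ f = 0 → ‖ι f‖ ≤ ε * ‖f‖ := by
  obtain ⟨n, Φ, hΦ⟩ :=
    (hι.isCompact_closure_image_closedBall 1).exists_clm_fin_norm_lt_of_map_eq_zero hε
  refine ⟨n, Φ ∘L ι, fun f hf => ?_⟩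
  let X := LinearMap.ker (Φ ∘L ι : B →ₗ[ℝ] (Fin n → ℝ))
  have hX : ‖ι ∘L X.subtypeL‖ ≤ ε := ContinuousLinearMap.opNorm_le_of_unit_norm hε.le
    fun x hx => (hΦ _ (subset_closure ⟨x, mem_closedBall_zero_iff.2 hx.le, rfl⟩) x.2).le
  simpa using (ι ∘L X.subtypeL).le_of_opNorm_le hX ⟨f, hf⟩

end

section

variable {B F : Type*} [NormedAddCommGroup B] [NormedSpace ℝ B]
  [NormedAddCommGroup F] [NormedSpace ℝ F]

theorem essNorm_nonneg (A : B →L[ℝ] B) : 0 ≤ essNorm A :=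
  Real.sInf_nonneg fun _ ⟨_, _, hr⟩ => hr ▸ norm_nonneg _

theorem essNorm_le_norm_sub {K : B →L[ℝ] B} (hK : IsCompactOperator K) (A : B →L[ℝ] B) :
    essNorm A ≤ ‖A - K‖ :=
  csInf_le ⟨0, fun _ ⟨_, _, hr⟩ => hr ▸ norm_nonneg _⟩ ⟨K, hK, rfl⟩

theorem essSpectralRadius_le_of_essNorm_pow_le {A : B →L[ℝ] B} {r : ℝ} (hr : 0 ≤ r) {N : ℕ}
    (hN : 0 < N) (h : essNorm (A ^ N) ≤ r ^ N) : essSpectralRadius A ≤ r := by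
  refine csInf_le_of_le ⟨0, ?_⟩ ⟨N, hN, rfl⟩ ?_
  · rintro _ ⟨n, -, rfl⟩
    exact Real.rpow_nonneg (essNorm_nonneg _) _
  · rw [one_div, ← Real.pow_rpow_inv_natCast hr hN.ne']
    exact Real.rpow_le_rpow (essNorm_nonneg _) h (by positivity)

theorem essNorm_le_of_norm_le_of_map_eq_zero [FiniteDimensional ℝ F] (T : B →L[ℝ] B)
    (Φ : B →L[ℝ] F) {b : ℝ} (hb : 0 ≤ b) (hT : ∀ f, Φ f = 0 → ‖T f‖ ≤ b * ‖f‖) :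
    essNorm T ≤ (1 + 2 * finrank ℝ F) * b := by
  obtain ⟨π, hπ, hΦπ, hπnorm⟩ := exists_isCompactOperator_comp_eq_norm_le Φ
  refine (essNorm_le_norm_sub (K := T ∘L π) (hπ.clm_comp T) T).trans <|
    ContinuousLinearMap.opNorm_le_bound _ (by positivity) fun f => ?_
  have hker : Φ (f - π f) = 0 := by
    rw [map_sub, ← ContinuousLinearMap.comp_apply, hΦπ, sub_self]
  calc ‖T f - T (π f)‖ = ‖T (f - π f)‖ := by rw [map_sub]
    _ ≤ b * (‖f‖ + ‖π f‖) := (hT _ hker).trans (by gcongr; exact norm_sub_le _ _)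
    _ ≤ b * (‖f‖ + 2 * finrank ℝ F * ‖f‖) := by gcongr; exact π.le_of_opNorm_le hπnorm f
    _ = (1 + 2 * finrank ℝ F) * b * ‖f‖ := by ring

theorem norm_pow_apply_le_of_norm_le_of_map_eq_zero {T : B →L[ℝ] B} {Φ : B →L[ℝ] F} {b : ℝ}
    (hb : 0 ≤ b) (hT : ∀ f, Φ f = 0 → ‖T f‖ ≤ b * ‖f‖) (k : ℕ) {f : B}
    (hf : ∀ j < k, Φ ((T ^ j) f) = 0) : ‖(T ^ k) f‖ ≤ b ^ k * ‖f‖ := by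
  induction k with
  | zero => simp
  | succ k ih =>
    calc ‖(T ^ (k + 1)) f‖ = ‖T ((T ^ k) f)‖ := by rw [pow_succ']; rfl
      _ ≤ b * (b ^ k * ‖f‖) := (hT _ (hf k k.lt_succ_self)).trans <| by
        gcongr; exact ih fun j hj => hf j (hj.trans k.lt_succ_self)
      _ = b ^ (k + 1) * ‖f‖ := by ring

theorem essNorm_pow_le_of_norm_le_of_map_eq_zero [FiniteDimensional ℝ F] {T : B →L[ℝ] B}
    {Φ : B →L[ℝ] F} {b : ℝ} (hb : 0 ≤ b) (hT : ∀ f, Φ f = 0 → ‖T f‖ ≤ b * ‖f‖) (k : ℕ) :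
    essNorm (T ^ k) ≤ (1 + 2 * (k * finrank ℝ F)) * b ^ k := by
  have h := essNorm_le_of_norm_le_of_map_eq_zero (T ^ k)
    (.pi fun j : Fin k => Φ ∘L T ^ (j : ℕ)) (pow_nonneg hb k) fun f hf =>
      norm_pow_apply_le_of_norm_le_of_map_eq_zero hb hT k fun j hj => congr_fun hf ⟨j, hj⟩
  simpa [Module.finrank_pi_fintype] using h

theorem exists_essNorm_pow_le_of_norm_le_of_map_eq_zero [FiniteDimensional ℝ F]
    {T : B →L[ℝ] B} {Φ : B →L[ℝ] F} {b R : ℝ} (hb : 0 ≤ b) (hbR : b < R)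
    (hT : ∀ f, Φ f = 0 → ‖T f‖ ≤ b * ‖f‖) :
    ∃ k, 0 < k ∧ essNorm (T ^ k) ≤ R ^ k := by
  have hR : 0 < R := hb.trans_lt hbR
  set q := b / R
  have hq : q < 1 := (div_lt_one hR).2 hbR
  have hlim : Tendsto (fun k : ℕ => (1 + 2 * (k * finrank ℝ F)) * q ^ k) atTop (𝓝 0) := by
    have h := (tendsto_pow_atTop_nhds_zero_of_lt_one (by positivity) hq).add
      ((tendsto_self_mul_const_pow_of_lt_one (by positivity) hq).const_mul
        (2 * finrank ℝ F : ℝ))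
    simp only [mul_zero, add_zero] at h
    exact Tendsto.congr (fun k => by ring) h
  obtain ⟨k, hk, hk1⟩ := ((hlim.eventually (gt_mem_nhds one_pos)).and
    (eventually_gt_atTop 0)).exists
  refine ⟨k, hk1, (essNorm_pow_le_of_norm_le_of_map_eq_zero hb hT k).trans ?_⟩
  calc (1 + 2 * (k * finrank ℝ F)) * b ^ k
      = (1 + 2 * (k * finrank ℝ F)) * q ^ k * R ^ k := by
        rw [div_pow, mul_assoc, div_mul_cancel₀ _ (pow_pos hR k).ne']
    _ ≤ R ^ k := mul_le_of_le_one_left (by positivity) hk.le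

end

theorem IsCompactOperator.exists_clm_fin_norm_le_of_norm_le_add {B B' : Type*}
    [NormedAddCommGroup B] [NormedSpace ℝ B] [NormedAddCommGroup B'] [NormedSpace ℝ B']
    {ι : B →L[ℝ] B'} (hι : IsCompactOperator ι) {T : B →L[ℝ] B} {a C δ : ℝ} (hδ : 0 < δ)
    (hT : ∀ f, ‖T f‖ ≤ a * ‖f‖ + C * ‖ι f‖) :
    ∃ (n : ℕ) (Φ : B →L[ℝ] (Fin n → ℝ)), ∀ f, Φ f = 0 → ‖T f‖ ≤ (a + δ) * ‖f‖ := by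
  obtain ⟨n, Φ, hΦ⟩ :=
    hι.exists_clm_fin_norm_le_of_map_eq_zero (by positivity : 0 < δ / (|C| + 1))
  refine ⟨n, Φ, fun f hf => (hT f).trans ?_⟩
  have hC : |C| * (δ / (|C| + 1)) ≤ δ := by
    rw [mul_div_assoc']
    exact div_le_of_le_mul₀ (by positivity) hδ.le (by nlinarith [abs_nonneg C])
  calc a * ‖f‖ + C * ‖ι f‖ ≤ a * ‖f‖ + |C| * (δ / (|C| + 1) * ‖f‖) := by
        gcongr _ + ?_ * ?_
        · exact le_abs_self C
        · exact hΦ f hf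
    _ = a * ‖f‖ + |C| * (δ / (|C| + 1)) * ‖f‖ := by ring
    _ ≤ (a + δ) * ‖f‖ := by nlinarith [mul_le_mul_of_nonneg_right hC (norm_nonneg f)]

theorem hennion_essential_spectral_radius_general
    {B B' : Type*} [NormedAddCommGroup B] [NormedSpace ℝ B]
    [NormedAddCommGroup B'] [NormedSpace ℝ B']
    (ι : B →L[ℝ] B') (hcomp : IsCompactOperator ι)
    (A : B →L[ℝ] B) (ρ : ℝ) (hρ : 0 < ρ) (C₁ : ℝ) (Cn : ℕ → ℝ)
    (hLY : ∀ n : ℕ, 1 ≤ n → ∀ f : B, ‖(A ^ n) f‖ ≤ C₁ * ρ ^ n * ‖f‖ + Cn n * ‖ι f‖) :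
    essSpectralRadius A ≤ ρ := by
  refine le_of_forall_gt_imp_ge_of_dense fun r hρr => ?_
  have hr : 0 < r := hρ.trans hρr
  have hlim : Tendsto (fun n : ℕ => (|C₁| + 1) * (ρ / r) ^ n) atTop (𝓝 0) := by
    simpa using (tendsto_pow_atTop_nhds_zero_of_lt_one (by positivity)
      ((div_lt_one hr).2 hρr)).const_mul (|C₁| + 1)
  obtain ⟨n, hgap, hn⟩ := ((hlim.eventually (gt_mem_nhds one_pos)).and
    (eventually_ge_atTop 1)).exists
  rw [div_pow, mul_div_assoc', div_lt_one (pow_pos hr n)] at hgap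
  have hLYn (f : B) : ‖(A ^ n) f‖ ≤ |C₁| * ρ ^ n * ‖f‖ + Cn n * ‖ι f‖ :=
    (hLY n hn f).trans (by gcongr; exact le_abs_self C₁)
  obtain ⟨m, Φ, hΦ⟩ := hcomp.exists_clm_fin_norm_le_of_norm_le_add (pow_pos hρ n) hLYn
  obtain ⟨k, hk, hAk⟩ := exists_essNorm_pow_le_of_norm_le_of_map_eq_zero (by positivity)
    (by linarith) hΦ
  refine essSpectralRadius_le_of_essNorm_pow_le hr.le (Nat.mul_pos hn hk) ?_
  rwa [pow_mul, pow_mul]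

theorem hennion_essential_spectral_radius
    {B B' : Type*} [NormedAddCommGroup B] [NormedSpace ℝ B] [CompleteSpace B]
    [NormedAddCommGroup B'] [NormedSpace ℝ B'] [CompleteSpace B']
    (ι : B →L[ℝ] B') (hinj : Function.Injective ι) (hcomp : IsCompactOperator ι)
    (A : B →L[ℝ] B) (ρ : ℝ) (hρ : 0 < ρ) (C₁ : ℝ) (Cn : ℕ → ℝ)
    (hLY : ∀ n : ℕ, 1 ≤ n → ∀ f : B, ‖(A ^ n) f‖ ≤ C₁ * ρ ^ n * ‖f‖ + Cn n * ‖ι f‖) :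
    essSpectralRadius A ≤ ρ :=
  hennion_essential_spectral_radius_general ι hcomp A ρ hρ C₁ Cn hLY
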